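/- Let (A, χ) be a C*-algebra with character, h a Hilbert space, π : A → B(h) a *-homomorphism and ξ ∈ h. Define ν := π − χ(·)I_h and φ : A → B(ℂ ⊕ h) by the block matrix φ(a) = [[⟨ξ, ν(a)ξ⟩, ⟨ξ|ν(a)],[ν(a)|ξ⟩, ν(a)]]. Then φ satisfies the χ-structure relation: φ(a*b) = φ(a)* χ(b) + conj(χ(a)) φ(b) + φ(a)* Δ φ(b), where Δ = 0 ⊕ I_h ∈ B(ℂ ⊕ h). -/

import Mathlib

/-!
Write `D(T)` (`vecBlk ξ T`) for the block operator `[[⟨ξ, Tξ⟩, ⟨ξ|T], [T|ξ⟩, T]]` on `ℂ ⊕ h`, so that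
`φ = D ∘ ν`. The map `D` is linear, intertwines adjoints (`D(T)* = D(T*)`), and is multiplicative
through `Δ`: `D(S) Δ D(T) = D(ST)`, since the corner `⟨ξ|S T|ξ⟩` is exactly the product of the
off-diagonal blocks. On the other side, multiplicativity of `π` and `χ` gives
`ν(a*b) = χ(b) ν(a*) + conj(χ(a)) ν(b) + ν(a*) ν(b)` with `ν(a*) = ν(a)*`; applying `D` yields the
structure relation.
-/

noncomputable section
open ContinuousLinearMap

/-- The Hilbert space `ĥ = ℂ ⊕ h` (with the `ℓ²` direct sum norm). -/
abbrev hilHat (h : Type*) [NormedAddCommGroup h] [InnerProductSpace ℂ h] :=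
  WithLp 2 (ℂ × h)

/-- Block operator `[[a, r],[cv, d]]` on `ℂ ⊕ h`. -/
def blk {h : Type*} [NormedAddCommGroup h] [InnerProductSpace ℂ h]
    (a : ℂ) (r : h →L[ℂ] ℂ) (cv : ℂ →L[ℂ] h) (d : h →L[ℂ] h) :
    hilHat h →L[ℂ] hilHat h :=
  let e := WithLp.prodContinuousLinearEquiv 2 ℂ ℂ h
  (e.symm : ℂ × h →L[ℂ] hilHat h) ∘L
    (((a • ContinuousLinearMap.fst ℂ ℂ h + r ∘L ContinuousLinearMap.snd ℂ ℂ h).prod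
      (cv ∘L ContinuousLinearMap.fst ℂ ℂ h + d ∘L ContinuousLinearMap.snd ℂ ℂ h))) ∘L
    (e : hilHat h →L[ℂ] ℂ × h)

section ShiftedHom

variable {R A B : Type*} [CommRing R] [Ring B] [Algebra R B]

theorem shifted_mul [Mul A] {F G : Type*} [FunLike F A B] [MulHomClass F A B] [FunLike G A R]
    [MulHomClass G A R] (π : F) (χ : G) (ν : A → B)
    (hν : ∀ a, ν a = π a - χ a • 1) (a b : A) :
    ν (a * b) = χ b • ν a + χ a • ν b + ν a * ν b := by
  simp only [hν, map_mul, mul_sub, sub_mul, smul_sub, mul_smul_comm,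
    smul_mul_assoc, mul_one, one_mul, smul_smul]
  module

theorem star_shifted [StarRing R] [Star A] [StarRing B] [StarModule R B] {F G : Type*}
    [FunLike F A B] [StarHomClass F A B] [FunLike G A R] [StarHomClass G A R]
    (π : F) (χ : G) (ν : A → B)
    (hν : ∀ a, ν a = π a - χ a • 1) (a : A) : star (ν a) = ν (star a) := by
  simp only [hν, star_sub, star_smul, star_one, map_star]

end ShiftedHom

section VecBlk

variable {h : Type*} [NormedAddCommGroup h] [InnerProductSpace ℂ h]

theorem blk_apply_fst (a : ℂ) (r : h →L[ℂ] ℂ) (cv : ℂ →L[ℂ] h) (d : h →L[ℂ] h)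
    (v : hilHat h) : (blk a r cv d v).fst = a * v.fst + r v.snd := rfl

theorem blk_apply_snd (a : ℂ) (r : h →L[ℂ] ℂ) (cv : ℂ →L[ℂ] h) (d : h →L[ℂ] h)
    (v : hilHat h) : (blk a r cv d v).snd = cv v.fst + d v.snd := rfl

theorem hilHat_op_ext {S T : hilHat h →L[ℂ] hilHat h}
    (hfst : ∀ v, (S v).fst = (T v).fst) (hsnd : ∀ v, (S v).snd = (T v).snd) : S = T :=
  ext fun v => WithLp.ofLp_injective 2 (Prod.ext (hfst v) (hsnd v))

variable (ξ : h)

def vecBlk : (h →L[ℂ] h) →ₗ[ℂ] (hilHat h →L[ℂ] hilHat h) where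
  toFun T := blk (inner ℂ ξ (T ξ)) (innerSL ℂ ξ ∘L T) (toSpanSingleton ℂ (T ξ)) T
  map_add' S T := hilHat_op_ext (fun v => by simp [blk_apply_fst]; ring)
    (fun v => by simp [blk_apply_snd]; abel)
  map_smul' c T := hilHat_op_ext (fun v => by simp [blk_apply_fst]; ring)
    (fun v => by simp [blk_apply_snd, smul_smul, mul_comm])

theorem vecBlk_apply (T : h →L[ℂ] h) :
    vecBlk ξ T = blk (inner ℂ ξ (T ξ)) (innerSL ℂ ξ ∘L T) (toSpanSingleton ℂ (T ξ)) T := rfl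

theorem vecBlk_comp_comp (S T : h →L[ℂ] h) :
    vecBlk ξ S ∘L blk 0 0 0 (ContinuousLinearMap.id ℂ h) ∘L vecBlk ξ T = vecBlk ξ (S ∘L T) :=
  hilHat_op_ext (fun v => by simp [vecBlk_apply, blk_apply_fst, blk_apply_snd, inner_add_right,
      inner_smul_right, mul_comm])
    (fun v => by simp [vecBlk_apply, blk_apply_fst, blk_apply_snd])

theorem star_vecBlk [CompleteSpace h] (T : h →L[ℂ] h) :
    star (vecBlk ξ T) = vecBlk ξ (adjoint T) := by
  rw [star_eq_adjoint, eq_comm, eq_adjoint_iff]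
  intro x y
  simp only [WithLp.prod_inner_apply, WithLp.ofLp_fst, WithLp.ofLp_snd, vecBlk_apply,
    blk_apply_fst, blk_apply_snd, comp_apply, innerSL_apply_apply, toSpanSingleton_apply,
    inner_add_left, inner_add_right, inner_smul_left, inner_smul_right,
    adjoint_inner_left, adjoint_inner_right, RCLike.inner_apply, map_add, map_mul, inner_conj_symm]
  ring

end VecBlk

theorem stmt7_general {A h : Type*} [NonUnitalNormedRing A] [StarRing A]
    [NormedSpace ℂ A]
    [NormedAddCommGroup h] [InnerProductSpace ℂ h] [CompleteSpace h]
    (χ : A →⋆ₙₐ[ℂ] ℂ)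
    (π : A →⋆ₙₐ[ℂ] (h →L[ℂ] h)) (ξ : h)
    (ν : A → (h →L[ℂ] h)) (hν : ∀ a, ν a = π a - χ a • ContinuousLinearMap.id ℂ h)
    (φ : A → (hilHat h →L[ℂ] hilHat h))
    (hφ : ∀ a, φ a = blk ((inner ℂ ξ (ν a ξ) : ℂ)) ((innerSL ℂ ξ) ∘L ν a)
        (ContinuousLinearMap.toSpanSingleton ℂ (ν a ξ)) (ν a))
    (Δop : hilHat h →L[ℂ] hilHat h)
    (hΔ : Δop = blk 0 0 0 (ContinuousLinearMap.id ℂ h)) :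
    ∀ a b : A, φ (star a * b) =
      χ b • star (φ a) + starRingEnd ℂ (χ a) • φ b + star (φ a) ∘L Δop ∘L φ b := by
  intro a b
  have hν_one : ∀ a, ν a = π a - χ a • 1 := hν
  have hφ_vec : ∀ a, φ a = vecBlk ξ (ν a) := hφ
  have hmul : ν (star a * b) = χ b • ν (star a) + starRingEnd ℂ (χ a) • ν b + ν (star a) ∘L ν b := by
    rw [shifted_mul π χ ν hν_one, map_star]
    rfl
  have hstar : star (φ a) = φ (star a) := by
    rw [hφ_vec, hφ_vec, star_vecBlk, ← star_eq_adjoint, star_shifted π χ ν hν_one]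
  rw [hstar, hΔ, hφ_vec, hφ_vec, hφ_vec, hmul, map_add, map_add, map_smul, map_smul,
    vecBlk_comp_comp]

/-- Let `(A, χ)` be a C*-algebra with character, `π : A → B(h)` a
*-homomorphism and `ξ ∈ h`.  With `ν := π − χ(·)I_h` and
`φ(a) = [[⟨ξ, ν(a)ξ⟩, ⟨ξ|ν(a)],[ν(a)|ξ⟩, ν(a)]] : A → B(ℂ ⊕ h)`, the map `φ`
satisfies the χ-structure relation
`φ(a*b) = φ(a)* χ(b) + conj(χ(a)) φ(b) + φ(a)* Δ φ(b)` where `Δ = 0 ⊕ I_h`. -/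
theorem stmt7 {A h : Type*} [NonUnitalNormedRing A] [StarRing A] [CStarRing A]
    [NormedSpace ℂ A] [IsScalarTower ℂ A A] [SMulCommClass ℂ A A] [StarModule ℂ A]
    [NormedAddCommGroup h] [InnerProductSpace ℂ h] [CompleteSpace h]
    (χ : A →⋆ₙₐ[ℂ] ℂ) (hχ : χ ≠ 0)
    (π : A →⋆ₙₐ[ℂ] (h →L[ℂ] h)) (ξ : h)
    (ν : A → (h →L[ℂ] h)) (hν : ∀ a, ν a = π a - χ a • ContinuousLinearMap.id ℂ h)
    (φ : A → (hilHat h →L[ℂ] hilHat h))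
    (hφ : ∀ a, φ a = blk ((inner ℂ ξ (ν a ξ) : ℂ)) ((innerSL ℂ ξ) ∘L ν a)
        (ContinuousLinearMap.toSpanSingleton ℂ (ν a ξ)) (ν a))
    (Δop : hilHat h →L[ℂ] hilHat h)
    (hΔ : Δop = blk 0 0 0 (ContinuousLinearMap.id ℂ h)) :
    ∀ a b : A, φ (star a * b) =
      χ b • star (φ a) + starRingEnd ℂ (χ a) • φ b + star (φ a) ∘L Δop ∘L φ b :=
  stmt7_general χ π ξ ν hν φ hφ Δop hΔ
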